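/- arXiv:1805.08535 — 2 statements merged into one kernel-verified Lean document; each statement's English description precedes it below -/
import Mathlib

section
/- Let J_k: ℝ^M → ℝ, k = 1,…,N, each be twice continuously differentiable with λ_{k,min} I ≤ ∇²J_k ≤ λ_{k,max} I, λ_{k,min} > 0. Let L be the Laplacian of a connected weighted graph on N nodes, and let P = I_N ⊗ I_M − μη (L ⊗ I_M) with 0 ≤ μη ≤ 2/λ_max(L). Then the map Y = P(X − μ col{∇J_k(x_k)}) on ℝ^{MN} satisfies ‖Y¹ − Y²‖ ≤ γ ‖X¹ − X²‖ with γ = max_k max{|1 − μ λ_{k,min}|, |1 − μ λ_{k,max}|}; in particular the map is a contraction when 0 < μ < min_k 2/λ_{k,max}. -/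
/-!
Each block `x ↦ x - μ ∇J_k x` has derivative `I - μ ∇²J_k x`, a symmetric operator whose
quadratic form lies between `(1 - μ λ_max) ‖v‖²` and `(1 - μ λ_min) ‖v‖²`. The norm of a symmetric
operator is the supremum of its Rayleigh quotient, so by the mean value theorem the block is
`max |1 - μ λ_min| |1 - μ λ_max|`-Lipschitz. The consensus step `I - μη (L ⊗ I)` is symmetric with
quadratic form between `-‖w‖²` and `‖w‖²` (because `0 ≤ L` and `μη L ≤ 2`), so by the same
Rayleigh bound it is nonexpansive. The map is the consensus step applied after the blockwise
gradient steps.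
-/

open RealInnerProductSpace InnerProductSpace

theorem abs_sub_mul_le_max_mul {a b μ s q : ℝ} (hs : 0 ≤ s) (ha : a * s ≤ q) (hb : q ≤ b * s) :
    |s - μ * q| ≤ max |1 - μ * a| |1 - μ * b| * s := by
  have hma := mul_le_mul_of_nonneg_right (le_max_left |1 - μ * a| |1 - μ * b|) hs
  have hmb := mul_le_mul_of_nonneg_right (le_max_right |1 - μ * a| |1 - μ * b|) hs
  have := le_abs_self (1 - μ * a)
  have := le_abs_self (1 - μ * b)
  have := neg_abs_le (1 - μ * a)
  have := neg_abs_le (1 - μ * b)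
  -- `s - μ q` lies between `(1 - μ a) s` and `(1 - μ b) s`
  rw [abs_le]
  rcases le_total 0 μ with hμ | hμ
  · constructor <;> nlinarith [mul_le_mul_of_nonneg_left ha hμ, mul_le_mul_of_nonneg_left hb hμ]
  · constructor <;> nlinarith [mul_le_mul_of_nonpos_left ha hμ, mul_le_mul_of_nonpos_left hb hμ]

theorem max_abs_one_sub_mul_lt_one {a b μ : ℝ} (hμ : 0 < μ) (ha : 0 < a) (hab : a ≤ b)
    (hμb : μ < 2 / b) : max |1 - μ * a| |1 - μ * b| < 1 := by
  have hb : μ * b < 2 := by rwa [lt_div_iff₀ (ha.trans_le hab)] at hμb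
  have : 0 < μ * a := mul_pos hμ ha
  have : μ * a ≤ μ * b := mul_le_mul_of_nonneg_left hab hμ.le
  exact max_lt (abs_lt.2 ⟨by linarith, by linarith⟩) (abs_lt.2 ⟨by linarith, by linarith⟩)

theorem Real.iSup_lt_of_forall_lt {ι : Type*} [Finite ι] {f : ι → ℝ} {a : ℝ} (ha : 0 < a)
    (h : ∀ i, f i < a) : ⨆ i, f i < a := by
  cases isEmpty_or_nonempty ι
  · rwa [Real.iSup_of_isEmpty]
  · obtain ⟨i, hi⟩ := Finite.exists_max f
    exact (ciSup_le hi).trans_lt (h i)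

section
variable {E : Type*} [NormedAddCommGroup E] [InnerProductSpace ℝ E]

namespace ContinuousLinearMap

theorem opNorm_le_of_abs_inner_le {T : E →L[ℝ] E} (hT : (T : E →ₗ[ℝ] E).IsSymmetric) {γ : ℝ}
    (hγ : 0 ≤ γ) (h : ∀ x, |⟪T x, x⟫| ≤ γ * ‖x‖ ^ 2) : ‖T‖ ≤ γ := by
  rw [T.norm_eq_iSup_rayleighQuotient hT]
  refine ciSup_le fun x => ?_
  rcases eq_or_ne x 0 with rfl | hx
  · simpa using hγ
  · rw [rayleighQuotient, reApplyInnerSelf_apply, abs_div, abs_sq, div_le_iff₀ (by positivity)]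
    simpa using h x

theorem norm_id_sub_smul_le {S : E →L[ℝ] E} (hS : (S : E →ₗ[ℝ] E).IsSymmetric) {a b : ℝ}
    (ha : ∀ v, a * ‖v‖ ^ 2 ≤ ⟪S v, v⟫) (hb : ∀ v, ⟪S v, v⟫ ≤ b * ‖v‖ ^ 2) (μ : ℝ) :
    ‖ContinuousLinearMap.id ℝ E - μ • S‖ ≤ max |1 - μ * a| |1 - μ * b| := by
  refine opNorm_le_of_abs_inner_le ?_ ((abs_nonneg _).trans (le_max_left _ _)) fun v => ?_
  · rw [toLinearMap_sub, toLinearMap_smul, coe_id]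
    exact LinearMap.IsSymmetric.id.sub (hS.smul (conj_trivial μ))
  · rw [sub_apply, smul_apply, id_apply, inner_sub_left, real_inner_smul_left,
      real_inner_self_eq_norm_sq]
    exact abs_sub_mul_le_max_mul (sq_nonneg _) (ha v) (hb v)

end ContinuousLinearMap

variable [CompleteSpace E]

/-- The Riesz map `(toDual ℝ E).symm` is only semilinear with respect to `starRingEnd ℝ`;
this is the same map as an `ℝ`-linear one, so that `gradient f = toDualSymmCLM ∘ fderiv ℝ f`
can be differentiated. -/
noncomputable def InnerProductSpace.toDualSymmCLM : StrongDual ℝ E →L[ℝ] E where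
  toFun := (toDual ℝ E).symm
  map_add' := map_add _
  map_smul' r ℓ := by simp
  cont := (toDual ℝ E).symm.continuous

theorem InnerProductSpace.inner_toDualSymmCLM (ℓ : StrongDual ℝ E) (u : E) :
    ⟪toDualSymmCLM ℓ, u⟫ = ℓ u :=
  toDual_symm_apply

namespace ContDiff

variable {f : E → ℝ} (hf : ContDiff ℝ 2 f)
include hf

theorem hasFDerivAt_gradient (x : E) :
    HasFDerivAt (gradient f) (toDualSymmCLM.comp (fderiv ℝ (fderiv ℝ f) x)) x :=
  toDualSymmCLM.hasFDerivAt.comp x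
    ((hf.fderiv_right one_add_one_eq_two.le).differentiable one_ne_zero x).hasFDerivAt

theorem inner_fderiv_gradient (x u w : E) :
    ⟪fderiv ℝ (gradient f) x u, w⟫ = fderiv ℝ (fderiv ℝ f) x u w := by
  rw [(hf.hasFDerivAt_gradient x).fderiv]
  exact inner_toDualSymmCLM _ _

theorem fderiv_gradient_isSymmetric (x : E) :
    (fderiv ℝ (gradient f) x : E →ₗ[ℝ] E).IsSymmetric := fun u w => by
  rw [ContinuousLinearMap.coe_coe, hf.inner_fderiv_gradient, real_inner_comm,
    hf.inner_fderiv_gradient]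
  exact (hf.contDiffAt.isSymmSndFDerivAt (by simp)).eq u w

theorem norm_sub_smul_gradient_sub_le {a b : ℝ}
    (hlo : ∀ x v, a * ‖v‖ ^ 2 ≤ ⟪v, fderiv ℝ (gradient f) x v⟫)
    (hhi : ∀ x v, ⟪v, fderiv ℝ (gradient f) x v⟫ ≤ b * ‖v‖ ^ 2) (μ : ℝ) (x y : E) :
    ‖(x - μ • gradient f x) - (y - μ • gradient f y)‖
      ≤ max |1 - μ * a| |1 - μ * b| * ‖x - y‖ := by
  have hderiv z : HasFDerivAt (fun w => w - μ • gradient f w)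
      (ContinuousLinearMap.id ℝ E - μ • fderiv ℝ (gradient f) z) z :=
    (hasFDerivAt_id z).sub ((hf.hasFDerivAt_gradient z).differentiableAt.hasFDerivAt.const_smul μ)
  have hbound z := ContinuousLinearMap.norm_id_sub_smul_le (hf.fderiv_gradient_isSymmetric z)
    (fun v => real_inner_comm v _ ▸ hlo z v) (fun v => real_inner_comm v _ ▸ hhi z v) μ
  simpa using Convex.norm_image_sub_le_of_norm_hasFDerivWithin_le
    (fun z _ => (hderiv z).hasFDerivWithinAt) (fun z _ => hbound z) convex_univ
    (Set.mem_univ y) (Set.mem_univ x)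

end ContDiff

end

namespace Matrix

variable {ι : Type*} [Fintype ι] {E : Type*} [NormedAddCommGroup E] [InnerProductSpace ℝ E]

/-- `A ⊗ I` acting on stacked vectors `col{w_k}`. -/
noncomputable def kronIdCLM (A : Matrix ι ι ℝ) :
    PiLp 2 (fun _ : ι => E) →L[ℝ] PiLp 2 (fun _ : ι => E) :=
  (PiLp.continuousLinearEquiv 2 ℝ (fun _ : ι => E)).symm.toContinuousLinearMap.comp
    (ContinuousLinearMap.pi fun k => ∑ l, A k l • PiLp.proj 2 (fun _ : ι => E) l)

@[simp]
theorem kronIdCLM_apply (A : Matrix ι ι ℝ) (w : PiLp 2 fun _ : ι => E) (k : ι) :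
    A.kronIdCLM w k = ∑ l, A k l • w l := by
  simp [kronIdCLM]

theorem kronIdCLM_sub (A B : Matrix ι ι ℝ) :
    (A - B).kronIdCLM (E := E) = A.kronIdCLM - B.kronIdCLM := by
  ext w k
  simp [sub_smul]

theorem kronIdCLM_smul (c : ℝ) (A : Matrix ι ι ℝ) :
    (c • A).kronIdCLM (E := E) = c • A.kronIdCLM := by
  ext w k
  simp [Finset.smul_sum, smul_smul]

theorem kronIdCLM_one [DecidableEq ι] :
    (1 : Matrix ι ι ℝ).kronIdCLM (E := E) = ContinuousLinearMap.id ℝ _ := by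
  ext w k
  simp [one_apply]

theorem inner_kronIdCLM_self (A : Matrix ι ι ℝ) (w : PiLp 2 fun _ : ι => E) :
    ⟪A.kronIdCLM w, w⟫ = ∑ k, ∑ l, A k l * ⟪w l, w k⟫ := by
  simp only [PiLp.inner_apply, kronIdCLM_apply, sum_inner, real_inner_smul_left]

theorem IsHermitian.kronIdCLM_isSymmetric {A : Matrix ι ι ℝ} (hA : A.IsHermitian) :
    (kronIdCLM (E := E) A : PiLp 2 (fun _ : ι => E) →ₗ[ℝ] PiLp 2 (fun _ : ι => E)).IsSymmetric := by
  intro v w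
  simp only [ContinuousLinearMap.coe_coe, PiLp.inner_apply, kronIdCLM_apply, sum_inner,
    inner_sum, real_inner_smul_left, real_inner_smul_right]
  rw [Finset.sum_comm]
  refine Finset.sum_congr rfl fun k _ => Finset.sum_congr rfl fun l _ => ?_
  rw [← hA.apply l k, real_inner_comm, star_trivial]

/-- By the Schur product theorem, `A ⊙ gram ℝ w` is positive semidefinite. -/
theorem PosSemidef.inner_kronIdCLM_self_nonneg {A : Matrix ι ι ℝ} (hA : A.PosSemidef)
    (w : PiLp 2 fun _ : ι => E) : 0 ≤ ⟪A.kronIdCLM w, w⟫ := by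
  have := (hA.hadamard (posSemidef_gram ℝ w)).dotProduct_mulVec_nonneg 1
  simpa [inner_kronIdCLM_self, dotProduct, mulVec, gram_apply,
    fun k l => real_inner_comm (w k) (w l)] using this

theorem PosSemidef.norm_sub_smul_kronIdCLM_le [DecidableEq ι] {L : Matrix ι ι ℝ}
    (hL : L.PosSemidef) {c : ℝ} (hc : 0 ≤ c)
    (h2 : ((2 : ℝ) • (1 : Matrix ι ι ℝ) - c • L).PosSemidef) (w : PiLp 2 fun _ : ι => E) :
    ‖w - c • L.kronIdCLM w‖ ≤ ‖w‖ := by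
  have hS : ((c • L.kronIdCLM (E := E) : _ →L[ℝ] _) :
      PiLp 2 (fun _ : ι => E) →ₗ[ℝ] PiLp 2 (fun _ : ι => E)).IsSymmetric := by
    rw [ContinuousLinearMap.toLinearMap_smul]
    exact hL.isHermitian.kronIdCLM_isSymmetric.smul (conj_trivial c)
  have hlo (v : PiLp 2 fun _ : ι => E) : 0 * ‖v‖ ^ 2 ≤ ⟪(c • L.kronIdCLM) v, v⟫ := by
    simpa [real_inner_smul_left] using mul_nonneg hc (hL.inner_kronIdCLM_self_nonneg v)
  have hhi (v : PiLp 2 fun _ : ι => E) : ⟪(c • L.kronIdCLM) v, v⟫ ≤ 2 * ‖v‖ ^ 2 := by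
    have := h2.inner_kronIdCLM_self_nonneg v
    rw [kronIdCLM_sub, kronIdCLM_smul, kronIdCLM_smul, kronIdCLM_one] at this
    simpa [inner_sub_left, real_inner_smul_left, real_inner_self_eq_norm_sq] using this
  have hnorm : ‖ContinuousLinearMap.id ℝ _ - (1 : ℝ) • c • L.kronIdCLM‖ ≤ 1 :=
    (ContinuousLinearMap.norm_id_sub_smul_le hS hlo hhi 1).trans_eq (by norm_num)
  simpa using ContinuousLinearMap.le_of_opNorm_le _ hnorm w

end Matrix

theorem PiLp.norm_le_mul_norm_of_forall_norm_le {ι : Type*} [Fintype ι] {β γ : ι → Type*}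
    [∀ i, SeminormedAddCommGroup (β i)] [∀ i, SeminormedAddCommGroup (γ i)]
    {x : PiLp 2 β} {y : PiLp 2 γ} {c : ℝ} (hc : 0 ≤ c) (h : ∀ i, ‖x i‖ ≤ c * ‖y i‖) :
    ‖x‖ ≤ c * ‖y‖ := by
  rw [PiLp.norm_eq_of_L2 x, PiLp.norm_eq_of_L2 y, ← Real.sqrt_sq hc,
    ← Real.sqrt_mul (sq_nonneg c), Finset.mul_sum]
  gcongr with i
  rw [← mul_pow]
  gcongr
  exact h i

theorem stmt5_general {N M : ℕ} (J : Fin N → EuclideanSpace ℝ (Fin M) → ℝ)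
    (hJ : ∀ k, ContDiff ℝ 2 (J k))
    (lmin lmax : Fin N → ℝ) (h0 : ∀ k, 0 < lmin k) (hle : ∀ k, lmin k ≤ lmax k)
    (hlo : ∀ k x v, lmin k * ‖v‖ ^ 2 ≤ ⟪v, fderiv ℝ (gradient (J k)) x v⟫)
    (hhi : ∀ k x v, ⟪v, fderiv ℝ (gradient (J k)) x v⟫ ≤ lmax k * ‖v‖ ^ 2)
    (L : Matrix (Fin N) (Fin N) ℝ) (hLpsd : L.PosSemidef)
    (μ η : ℝ) (hμη0 : 0 ≤ μ * η)
    (hμη : ((2 : ℝ) • (1 : Matrix (Fin N) (Fin N) ℝ) - (μ * η) • L).PosSemidef)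
    (γ : ℝ) (hγ : γ = ⨆ k, max |1 - μ * lmin k| |1 - μ * lmax k|)
    (T : (PiLp 2 fun _ : Fin N => EuclideanSpace ℝ (Fin M)) →
      PiLp 2 fun _ : Fin N => EuclideanSpace ℝ (Fin M))
    (hT : ∀ X k, T X k = (X k - μ • gradient (J k) (X k))
        - (μ * η) • ∑ l, L k l • (X l - μ • gradient (J l) (X l))) :
    (∀ X1 X2, ‖T X1 - T X2‖ ≤ γ * ‖X1 - X2‖) ∧
      ((0 < μ ∧ ∀ k, μ < 2 / lmax k) → γ < 1) := by
  let G (X : PiLp 2 fun _ : Fin N => EuclideanSpace ℝ (Fin M)) :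
      PiLp 2 fun _ : Fin N => EuclideanSpace ℝ (Fin M) :=
    WithLp.toLp 2 fun k => X k - μ • gradient (J k) (X k)
  have hTG X : T X = G X - (μ * η) • L.kronIdCLM (G X) := PiLp.ext fun k => by simp [hT, G]
  have hγk (k : Fin N) : max |1 - μ * lmin k| |1 - μ * lmax k| ≤ γ :=
    hγ ▸ le_ciSup (f := fun k => max |1 - μ * lmin k| |1 - μ * lmax k|)
      (Finite.bddAbove_range _) k
  have hγ0 : 0 ≤ γ := hγ ▸ Real.iSup_nonneg fun _ => (abs_nonneg _).trans (le_max_left _ _)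
  refine ⟨fun X1 X2 => ?_, fun ⟨hμ, hμlmax⟩ => ?_⟩
  · calc ‖T X1 - T X2‖ = ‖(G X1 - G X2) - (μ * η) • L.kronIdCLM (G X1 - G X2)‖ := by
          rw [hTG, hTG, map_sub, smul_sub]
          abel_nf
      _ ≤ ‖G X1 - G X2‖ := hLpsd.norm_sub_smul_kronIdCLM_le hμη0 hμη _
      _ ≤ γ * ‖X1 - X2‖ := PiLp.norm_le_mul_norm_of_forall_norm_le hγ0 fun k =>
          ((hJ k).norm_sub_smul_gradient_sub_le (hlo k) (hhi k) μ (X1 k) (X2 k)).trans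
            (mul_le_mul_of_nonneg_right (hγk k) (norm_nonneg _))
  · exact hγ ▸ Real.iSup_lt_of_forall_lt one_pos fun k =>
      max_abs_one_sub_mul_lt_one hμ (h0 k) (hle k) (hμlmax k)

theorem stmt5 {N M : ℕ} (J : Fin N → EuclideanSpace ℝ (Fin M) → ℝ)
    (hJ : ∀ k, ContDiff ℝ 2 (J k))
    (lmin lmax : Fin N → ℝ) (h0 : ∀ k, 0 < lmin k) (hle : ∀ k, lmin k ≤ lmax k)
    (hlo : ∀ k x v, lmin k * ‖v‖ ^ 2 ≤ ⟪v, fderiv ℝ (gradient (J k)) x v⟫)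
    (hhi : ∀ k x v, ⟪v, fderiv ℝ (gradient (J k)) x v⟫ ≤ lmax k * ‖v‖ ^ 2)
    (L : Matrix (Fin N) (Fin N) ℝ) (hLsymm : L.IsSymm) (hLpsd : L.PosSemidef)
    (μ η : ℝ) (hμη0 : 0 ≤ μ * η)
    (hμη : ((2 : ℝ) • (1 : Matrix (Fin N) (Fin N) ℝ) - (μ * η) • L).PosSemidef)
    (γ : ℝ) (hγ : γ = ⨆ k, max |1 - μ * lmin k| |1 - μ * lmax k|)
    (T : (PiLp 2 fun _ : Fin N => EuclideanSpace ℝ (Fin M)) →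
      PiLp 2 fun _ : Fin N => EuclideanSpace ℝ (Fin M))
    (hT : ∀ X k, T X k = (X k - μ • gradient (J k) (X k))
        - (μ * η) • ∑ l, L k l • (X l - μ • gradient (J l) (X l))) :
    (∀ X1 X2, ‖T X1 - T X2‖ ≤ γ * ‖X1 - X2‖) ∧
      ((0 < μ ∧ ∀ k, μ < 2 / lmax k) → γ < 1) :=
  stmt5_general J hJ lmin lmax h0 hle hlo hhi L hLpsd μ η hμη0 hμη γ hγ T hT
end

section
/- Let L be the Laplacian of a connected graph on N nodes with orthonormal eigenbasis V = [v_1, V_R], v_1 = 𝟙/√N, and eigenvalues 0 = λ_1 < λ_2 ≤ … ≤ λ_N. Let H = diag{H_1,…,H_N} ⪰ λ_min I with λ_min > 0 (each H_k symmetric M×M), η ≥ 0, and W_η = (H + η L⊗I_M)^{-1} H W for W ∈ ℝ^{MN}. Then the transformed difference satisfies (V_R^T ⊗ I_M)(W_η − W) = (K − I)(V_R^T ⊗ I_M) W, where K = I − η G (Λ_o ⊗ I_M), G = (Q22 − Q12^T Q11^{-1} Q12)^{-1}, Q11 = (v_1^T⊗I)H(v_1⊗I), Q12 = (v_1^T⊗I)H(V_R⊗I),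 Q22 = (V_R^T⊗I)H(V_R⊗I) + η Λ_o⊗I, and Λ_o = diag{λ_2,…,λ_N}. In particular, if (V_R^T ⊗ I_M) W = 0 then W_η = W. -/
open Matrix Kronecker

/-!
With `C₁ = v₁ ⊗ I` and `C₂ = V_R ⊗ I`, the matrix `[C₁ C₂]` is orthogonal and
`L ⊗ I = C₂ (Λ_o ⊗ I) C₂ᵀ`. Since `H` is positive definite, so is `A = H + η L ⊗ I`, and
`W_η - W = -η A⁻¹ (L ⊗ I) W`. In the frame `[C₁ C₂]`, `A` has the blocks `Q11, Q12, Q22`, so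
`C₂ᵀ A⁻¹ C₂` is the inverse of the Schur complement `Q22 - Q12ᵀ Q11⁻¹ Q12`, i.e. it is `G`.
Hence `C₂ᵀ (W_η - W) = -η G (Λ_o ⊗ I) C₂ᵀ W`.
-/

namespace Matrix

section VecKroneckerOne

variable {R : Type*} [CommSemiring R] {l m n : Type*} [DecidableEq m]

def vecKroneckerOne (v : n → R) : Matrix (n × m) m R :=
  of fun p j => v p.1 * (1 : Matrix m m R) p.2 j

@[simp]
theorem vecKroneckerOne_zero : (vecKroneckerOne (0 : n → R) : Matrix (n × m) m R) = 0 := by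
  ext; simp [vecKroneckerOne]

variable [Fintype m]

-- Without the type ascriptions, `*` below elaborates with `CStarMatrix`'s multiplication.
theorem vecKroneckerOne_mul_transpose (v w : n → R) :
    (vecKroneckerOne v : Matrix (n × m) m R) * (vecKroneckerOne w : Matrix (n × m) m R)ᵀ =
      vecMulVec v w ⊗ₖ (1 : Matrix m m R) := by
  ext p q
  simp [vecKroneckerOne, mul_apply, one_apply, vecMulVec_apply]

variable [Fintype n]

theorem transpose_vecKroneckerOne_mul (v w : n → R) :
    (vecKroneckerOne v : Matrix (n × m) m R)ᵀ * (vecKroneckerOne w : Matrix (n × m) m R) =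
      (v ⬝ᵥ w) • (1 : Matrix m m R) := by
  ext i j
  simp [vecKroneckerOne, mul_apply, Fintype.sum_prod_type, one_apply, dotProduct, eq_comm]

theorem kronecker_one_mul_vecKroneckerOne (A : Matrix l n R) (v : n → R) :
    (A ⊗ₖ (1 : Matrix m m R)) * (vecKroneckerOne v : Matrix (n × m) m R) =
      vecKroneckerOne (A *ᵥ v) := by
  ext p j
  simp [vecKroneckerOne, mul_apply, Fintype.sum_prod_type, one_apply, mulVec, dotProduct]

theorem transpose_vecKroneckerOne_mul_kronecker_one (B : Matrix n l R) (v : n → R) :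
    (vecKroneckerOne v : Matrix (n × m) m R)ᵀ * (B ⊗ₖ (1 : Matrix m m R)) =
      (vecKroneckerOne (Bᵀ *ᵥ v))ᵀ := by
  ext i q
  simp [vecKroneckerOne, mul_apply, Fintype.sum_prod_type, one_apply, mulVec, dotProduct, mul_comm]

theorem vecKroneckerOne_kronecker_one_orthogonal {k : Type*} [Fintype k] [DecidableEq n]
    [DecidableEq k] {v : n → R} {V : Matrix n k R} (hv : v ⬝ᵥ v = 1) (hV : Vᵀ * V = 1)
    (hVv : Vᵀ *ᵥ v = 0) (hc : vecMulVec v v + V * Vᵀ = 1) :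
    let C₁ : Matrix (n × m) m R := vecKroneckerOne v
    let C₂ := V ⊗ₖ (1 : Matrix m m R)
    C₁ᵀ * C₁ = 1 ∧ C₁ᵀ * C₂ = 0 ∧ C₂ᵀ * C₂ = 1 ∧ C₁ * C₁ᵀ + C₂ * C₂ᵀ = 1 := by
  refine ⟨?_, ?_, ?_, ?_⟩
  · rw [transpose_vecKroneckerOne_mul, hv, one_smul]
  · rw [transpose_vecKroneckerOne_mul_kronecker_one, hVv, vecKroneckerOne_zero, transpose_zero]
  · rw [← kroneckerMap_transpose, transpose_one, ← mul_kronecker_mul, hV, Matrix.one_mul,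
      one_kronecker_one]
  · rw [vecKroneckerOne_mul_transpose, ← kroneckerMap_transpose, transpose_one,
      ← mul_kronecker_mul, Matrix.one_mul, ← add_kronecker, hc, one_kronecker_one]

end VecKroneckerOne

section ProdBlockDiagonal

variable {α m n o : Type*} [DecidableEq o]

/-- Mathlib's `blockDiagonal` indexes by `m × o`, with the block index second. -/
def prodBlockDiagonal [Zero α] (H : o → Matrix m n α) : Matrix (o × m) (o × n) α :=
  of fun p q => if p.1 = q.1 then H p.1 p.2 q.2 else 0

open scoped ComplexOrder in
theorem PosDef.prodBlockDiagonal {𝕜 : Type*} [RCLike 𝕜] [Fintype m] [Fintype o]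
    {H : o → Matrix m m 𝕜} (hH : ∀ k, (H k).PosDef) : (prodBlockDiagonal H).PosDef := by
  refine PosDef.of_dotProduct_mulVec_pos ?_ fun x hx => ?_
  · ext p q
    by_cases h : p.1 = q.1
    · simp [Matrix.prodBlockDiagonal, h, ← (hH q.1).isHermitian.apply p.2 q.2]
    · simp [Matrix.prodBlockDiagonal, h, Ne.symm h]
  · set y : o → m → 𝕜 := fun k i => x (k, i)
    have hquad : star x ⬝ᵥ (Matrix.prodBlockDiagonal H *ᵥ x) =
        ∑ k, star (y k) ⬝ᵥ (H k *ᵥ y k) := by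
      simp [Matrix.prodBlockDiagonal, y, dotProduct, mulVec, Fintype.sum_prod_type, ite_mul]
    obtain ⟨k, hk⟩ : ∃ k, y k ≠ 0 := by
      by_contra! h
      exact hx (funext fun p => congrFun (h p.1) p.2)
    rw [hquad]
    exact Finset.sum_pos' (fun k _ => (hH k).posSemidef.dotProduct_mulVec_nonneg (y k))
      ⟨k, Finset.mem_univ k, (hH k).dotProduct_mulVec_pos hk⟩

end ProdBlockDiagonal

theorem PosDef.transpose_mul_mul_of_transpose_mul_self_eq_one {n m : Type*} [Fintype n]
    [Fintype m] [DecidableEq m] {H : Matrix n n ℝ} (hH : H.PosDef) {C : Matrix n m ℝ}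
    (hC : Cᵀ * C = 1) : (Cᵀ * H * C).PosDef := by
  have hinj : Function.Injective C.mulVec := fun x y hxy => by
    simpa [mulVec_mulVec, hC] using congrArg (Cᵀ *ᵥ ·) hxy
  simpa only [conjTranspose_eq_transpose_of_trivial] using hH.conjTranspose_mul_mul_same hinj

section Frame

variable {R : Type*} [CommRing R] {n m k : Type*} [Fintype n] [Fintype m] [Fintype k]
  [DecidableEq n]

theorem inv_add_mulVec_mulVec_sub {A B : Matrix n n R} (h : IsUnit (A + B).det) (w : n → R) :
    (A + B)⁻¹ *ᵥ (A *ᵥ w) - w = -((A + B)⁻¹ *ᵥ (B *ᵥ w)) := by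
  rw [eq_neg_iff_add_eq_zero, sub_add_eq_add_sub, ← mulVec_add, ← add_mulVec, mulVec_mulVec,
    nonsing_inv_mul _ h, one_mulVec, sub_self]

theorem eq_mul_mul_transpose_of_mul_eq {L : Matrix n n R} {C₁ : Matrix n m R}
    {C₂ : Matrix n k R} (hC : C₁ * C₁ᵀ + C₂ * C₂ᵀ = 1) (h₁ : L * C₁ = 0) {D : Matrix k k R}
    (h₂ : L * C₂ = C₂ * D) : L = C₂ * D * C₂ᵀ := by
  calc L = L * (C₁ * C₁ᵀ + C₂ * C₂ᵀ) := by rw [hC, Matrix.mul_one]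
    _ = C₂ * D * C₂ᵀ := by
      rw [Matrix.mul_add, ← Matrix.mul_assoc, ← Matrix.mul_assoc, h₁, h₂, Matrix.zero_mul,
        zero_add]

variable [DecidableEq m] [DecidableEq k]

theorem inv_schurComplement_eq_transpose_mul_inv_mul {A : Matrix n n R} (hA : IsUnit A.det)
    {C₁ : Matrix n m R} {C₂ : Matrix n k R} (hC : C₁ * C₁ᵀ + C₂ * C₂ᵀ = 1)
    (h₁₂ : C₁ᵀ * C₂ = 0) (h₂₂ : C₂ᵀ * C₂ = 1) (hQ : IsUnit (C₁ᵀ * A * C₁).det) :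
    (C₂ᵀ * A * C₂ - C₂ᵀ * A * C₁ * (C₁ᵀ * A * C₁)⁻¹ * (C₁ᵀ * A * C₂))⁻¹ = C₂ᵀ * A⁻¹ * C₂ := by
  have hAY : A * (A⁻¹ * C₂) = C₂ := by rw [← Matrix.mul_assoc, mul_nonsing_inv A hA, Matrix.one_mul]
  -- `A⁻¹ C₂ = C (Cᵀ A⁻¹ C₂)` for `C = [C₁ C₂]`; multiplying `A (A⁻¹ C₂) = C₂` by `C₁ᵀ` and `C₂ᵀ`
  -- gives the block rows of `(Cᵀ A C) (Cᵀ A⁻¹ C₂) = Cᵀ C₂`.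
  have hrow : A * (C₁ * (C₁ᵀ * (A⁻¹ * C₂))) + A * (C₂ * (C₂ᵀ * (A⁻¹ * C₂))) = C₂ := by
    rw [← Matrix.mul_add, ← Matrix.mul_assoc C₁, ← Matrix.mul_assoc C₂, ← Matrix.add_mul, hC,
      Matrix.one_mul, hAY]
  have row₁ : C₁ᵀ * A * C₁ * (C₁ᵀ * (A⁻¹ * C₂)) + C₁ᵀ * A * C₂ * (C₂ᵀ * (A⁻¹ * C₂)) = 0 := by
    simpa only [Matrix.mul_add, Matrix.mul_assoc, h₁₂] using congrArg (C₁ᵀ * ·) hrow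
  have row₂ : C₂ᵀ * A * C₁ * (C₁ᵀ * (A⁻¹ * C₂)) + C₂ᵀ * A * C₂ * (C₂ᵀ * (A⁻¹ * C₂)) = 1 := by
    simpa only [Matrix.mul_add, Matrix.mul_assoc, h₂₂] using congrArg (C₂ᵀ * ·) hrow
  have hY₁ : C₁ᵀ * (A⁻¹ * C₂) = -((C₁ᵀ * A * C₁)⁻¹ * (C₁ᵀ * A * C₂ * (C₂ᵀ * (A⁻¹ * C₂)))) := by
    rw [← Matrix.mul_neg, ← eq_neg_of_add_eq_zero_left row₁, nonsing_inv_mul_cancel_left _ _ hQ]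
  refine inv_eq_right_inv ?_
  rw [← row₂, hY₁]
  simp only [Matrix.sub_mul, Matrix.mul_neg, Matrix.mul_assoc]
  abel

/-- The perturbation `η C₂ D C₂ᵀ` only changes the `(2,2)` block in the frame `[C₁ C₂]`. -/
theorem inv_schurComplement_add_smul_mul_mul_transpose {H : Matrix n n R} (hH : Hᵀ = H)
    {C₁ : Matrix n m R} {C₂ : Matrix n k R} (hC : C₁ * C₁ᵀ + C₂ * C₂ᵀ = 1)
    (h₁₂ : C₁ᵀ * C₂ = 0) (h₂₂ : C₂ᵀ * C₂ = 1) (D : Matrix k k R) (η : R)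
    (hA : IsUnit (H + η • (C₂ * D * C₂ᵀ)).det) (hQ : IsUnit (C₁ᵀ * H * C₁).det) :
    (C₂ᵀ * H * C₂ + η • D - (C₁ᵀ * H * C₂)ᵀ * (C₁ᵀ * H * C₁)⁻¹ * (C₁ᵀ * H * C₂))⁻¹ =
      C₂ᵀ * (H + η • (C₂ * D * C₂ᵀ))⁻¹ * C₂ := by
  have h₂₁ : C₂ᵀ * C₁ = 0 := by
    rw [← transpose_transpose (C₂ᵀ * C₁), transpose_mul, transpose_transpose, h₁₂,
      transpose_zero]
  have hC₁ : C₁ᵀ * (H + η • (C₂ * D * C₂ᵀ)) = C₁ᵀ * H := by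
    simp only [Matrix.mul_add, Matrix.mul_smul, ← Matrix.mul_assoc, h₁₂, Matrix.zero_mul,
      smul_zero, add_zero]
  have hC₂ : C₂ᵀ * (H + η • (C₂ * D * C₂ᵀ)) * C₂ = C₂ᵀ * H * C₂ + η • D := by
    simp only [Matrix.mul_add, Matrix.add_mul, Matrix.mul_smul, Matrix.smul_mul,
      ← Matrix.mul_assoc, h₂₂, Matrix.one_mul, Matrix.mul_assoc D, Matrix.mul_one]
  have hC₂₁ : C₂ᵀ * (H + η • (C₂ * D * C₂ᵀ)) * C₁ = (C₁ᵀ * H * C₂)ᵀ := by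
    simp only [Matrix.mul_add, Matrix.add_mul, Matrix.mul_smul, Matrix.smul_mul, transpose_mul,
      transpose_transpose, hH, Matrix.mul_assoc, h₂₁, Matrix.mul_zero, smul_zero, add_zero]
  rw [← hC₂, ← hC₂₁, ← hC₁]
  exact inv_schurComplement_eq_transpose_mul_inv_mul hA hC h₁₂ h₂₂ (by rwa [hC₁])

end Frame

end Matrix

theorem stmt18_general {N M : ℕ}
    (L : Matrix (Fin (N + 1)) (Fin (N + 1)) ℝ) (hLpsd : L.PosSemidef)
    (v1 : Fin (N + 1) → ℝ) (hv1 : v1 = fun _ => 1 / Real.sqrt (N + 1))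
    (VR : Matrix (Fin (N + 1)) (Fin N) ℝ)
    (hVRorth : VRᵀ * VR = 1)
    (hVRv1 : VRᵀ *ᵥ v1 = 0)
    (hcomplete : Matrix.vecMulVec v1 v1 + VR * VRᵀ = 1)
    (lam : Fin N → ℝ)
    (hLv1 : L *ᵥ v1 = 0)
    (hLVR : L * VR = VR * Matrix.diagonal lam)
    (H : Fin (N + 1) → Matrix (Fin M) (Fin M) ℝ)
    (lmin : ℝ) (hlmin : 0 < lmin)
    (hHlo : ∀ k, (H k - lmin • 1).PosSemidef)
    (η : ℝ) (hη : 0 ≤ η)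
    (W : Fin (N + 1) × Fin M → ℝ) :
    let ℋ : Matrix (Fin (N + 1) × Fin M) (Fin (N + 1) × Fin M) ℝ :=
      Matrix.of fun p q => if p.1 = q.1 then H p.1 p.2 q.2 else 0
    let ℒ := L ⊗ₖ (1 : Matrix (Fin M) (Fin M) ℝ)
    let Wη := (ℋ + η • ℒ)⁻¹ *ᵥ (ℋ *ᵥ W)
    let C1 : Matrix (Fin (N + 1) × Fin M) (Fin M) ℝ :=
      Matrix.of fun p j => v1 p.1 * (1 : Matrix (Fin M) (Fin M) ℝ) p.2 j
    let CR := VR ⊗ₖ (1 : Matrix (Fin M) (Fin M) ℝ)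
    let Q11 := C1ᵀ * ℋ * C1
    let Q12 := C1ᵀ * ℋ * CR
    let Q22 := CRᵀ * ℋ * CR + η • (Matrix.diagonal lam ⊗ₖ (1 : Matrix (Fin M) (Fin M) ℝ))
    let G := (Q22 - Q12ᵀ * Q11⁻¹ * Q12)⁻¹
    let K := 1 - η • (G * (Matrix.diagonal lam ⊗ₖ (1 : Matrix (Fin M) (Fin M) ℝ)))
    (CRᵀ *ᵥ (Wη - W) = (K - 1) *ᵥ (CRᵀ *ᵥ W)) ∧ (CRᵀ *ᵥ W = 0 → Wη = W) := by
  intro ℋ ℒ Wη C1 CR Q11 Q12 Q22 G K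
  set D := diagonal lam ⊗ₖ (1 : Matrix (Fin M) (Fin M) ℝ)
  have hℋ : ℋ.PosDef := PosDef.prodBlockDiagonal fun k => by
    simpa using PosDef.posSemidef_add (hHlo k) (PosDef.one.smul hlmin)
  have hA : IsUnit (ℋ + η • ℒ).det :=
    (hℋ.add_posSemidef ((hLpsd.kronecker PosSemidef.one).smul hη)).det_pos.ne'.isUnit
  have hv : v1 ⬝ᵥ v1 = 1 := by
    have hN : (0 : ℝ) < N + 1 := by positivity
    simp [hv1, dotProduct, ← sq, Real.sq_sqrt hN.le, hN.ne']
  obtain ⟨h11, h12, h22, hC⟩ : C1ᵀ * C1 = 1 ∧ C1ᵀ * CR = 0 ∧ CRᵀ * CR = 1 ∧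
      C1 * C1ᵀ + CR * CRᵀ = 1 :=
    vecKroneckerOne_kronecker_one_orthogonal hv hVRorth hVRv1 hcomplete
  have hℒ : ℒ = CR * D * CRᵀ := by
    refine eq_mul_mul_transpose_of_mul_eq hC ?_ ?_
    · rw [show C1 = vecKroneckerOne v1 from rfl, kronecker_one_mul_vecKroneckerOne, hLv1,
        vecKroneckerOne_zero]
    · rw [← mul_kronecker_mul, ← mul_kronecker_mul, hLVR, Matrix.one_mul]
  have hG : G = CRᵀ * (ℋ + η • ℒ)⁻¹ * CR := by
    have hℋt : ℋᵀ = ℋ := by simpa using hℋ.isHermitian.eq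
    have hQ11 : IsUnit Q11.det :=
      (hℋ.transpose_mul_mul_of_transpose_mul_self_eq_one h11).det_pos.ne'.isUnit
    rw [hℒ] at hA ⊢
    exact inv_schurComplement_add_smul_mul_mul_transpose hℋt hC h12 h22 D η hA hQ11
  have hdiff : Wη - W = -((ℋ + η • ℒ)⁻¹ *ᵥ ((η • ℒ) *ᵥ W)) := inv_add_mulVec_mulVec_sub hA W
  refine ⟨?_, fun h0 => ?_⟩
  · rw [hdiff, show K - 1 = -(η • (G * D)) from sub_sub_cancel_left _ _, hG, hℒ]
    simp only [mulVec_neg, neg_mulVec, smul_mulVec, mulVec_smul, mulVec_mulVec, Matrix.neg_mul,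
      Matrix.smul_mul, Matrix.mul_assoc]
  · have hℒW : ℒ *ᵥ W = 0 := by rw [hℒ, ← mulVec_mulVec, h0, mulVec_zero]
    rw [← sub_eq_zero, hdiff, smul_mulVec, hℒW, smul_zero, mulVec_zero, neg_zero]

theorem stmt18 {N M : ℕ}
    (L : Matrix (Fin (N + 1)) (Fin (N + 1)) ℝ) (hLsymm : L.IsSymm) (hLpsd : L.PosSemidef)
    (v1 : Fin (N + 1) → ℝ) (hv1 : v1 = fun _ => 1 / Real.sqrt (N + 1))
    (VR : Matrix (Fin (N + 1)) (Fin N) ℝ)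
    (hVRorth : VRᵀ * VR = 1)
    (hVRv1 : VRᵀ *ᵥ v1 = 0)
    (hcomplete : Matrix.vecMulVec v1 v1 + VR * VRᵀ = 1)
    (lam : Fin N → ℝ) (hlam : ∀ i, 0 < lam i)
    (hLv1 : L *ᵥ v1 = 0)
    (hLVR : L * VR = VR * Matrix.diagonal lam)
    (H : Fin (N + 1) → Matrix (Fin M) (Fin M) ℝ)
    (hHsymm : ∀ k, (H k).IsSymm)
    (lmin : ℝ) (hlmin : 0 < lmin)
    (hHlo : ∀ k, (H k - lmin • 1).PosSemidef)
    (η : ℝ) (hη : 0 ≤ η)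
    (W : Fin (N + 1) × Fin M → ℝ) :
    let ℋ : Matrix (Fin (N + 1) × Fin M) (Fin (N + 1) × Fin M) ℝ :=
      Matrix.of fun p q => if p.1 = q.1 then H p.1 p.2 q.2 else 0
    let ℒ := L ⊗ₖ (1 : Matrix (Fin M) (Fin M) ℝ)
    let Wη := (ℋ + η • ℒ)⁻¹ *ᵥ (ℋ *ᵥ W)
    let C1 : Matrix (Fin (N + 1) × Fin M) (Fin M) ℝ :=
      Matrix.of fun p j => v1 p.1 * (1 : Matrix (Fin M) (Fin M) ℝ) p.2 j
    let CR := VR ⊗ₖ (1 : Matrix (Fin M) (Fin M) ℝ)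
    let Q11 := C1ᵀ * ℋ * C1
    let Q12 := C1ᵀ * ℋ * CR
    let Q22 := CRᵀ * ℋ * CR + η • (Matrix.diagonal lam ⊗ₖ (1 : Matrix (Fin M) (Fin M) ℝ))
    let G := (Q22 - Q12ᵀ * Q11⁻¹ * Q12)⁻¹
    let K := 1 - η • (G * (Matrix.diagonal lam ⊗ₖ (1 : Matrix (Fin M) (Fin M) ℝ)))
    (CRᵀ *ᵥ (Wη - W) = (K - 1) *ᵥ (CRᵀ *ᵥ W)) ∧ (CRᵀ *ᵥ W = 0 → Wη = W) :=
  stmt18_general L hLpsd v1 hv1 VR hVRorth hVRv1 hcomplete lam hLv1 hLVR H lmin hlmin hHlo η hη W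
end
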